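/- For each i,j, let k̃_{ij}(γ) = exp(−γ‖X_i − X_j‖²) and define the centered kernel k_{ij}(γ) = k̃_{ij} − T⁻¹∑_l k̃_{il} − T⁻¹∑_l k̃_{lj} + T⁻²∑_{l,m} k̃_{lm}. If the rows X_1, …, X_T ∈ ℝ^N satisfy ∑_l X_l = 0, then lim_{γ→0} (2γ)⁻¹ k_{ij}(γ) = X_i'X_j for all i, j. -/

import Mathlib

/-!
Write `d_ab = ‖X_a - X_b‖²`. Double centering is linear and kills every kernel of the form
`f a + g b`, so centering `d = ‖X_a‖² + ‖X_b‖² - 2 X_a'X_b` leaves `-2` times the centered Gram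
matrix, which for centered data is the Gram matrix itself. The centered RBF kernel vanishes at
`γ = 0` (the constant kernel `1` is killed) and its derivative there is the centering of `-d`,
i.e. `2 X_i'X_j`; the rescaled kernel is half its difference quotient at `0`.
-/

open Filter Topology Finset

noncomputable section

section DoubleCenter

variable {ι : Type*} [Fintype ι]

def doubleCenter (K : ι → ι → ℝ) (i j : ι) : ℝ :=
  K i j - (Fintype.card ι : ℝ)⁻¹ * ∑ l, K i l - (Fintype.card ι : ℝ)⁻¹ * ∑ l, K l j
    + ((Fintype.card ι : ℝ) ^ 2)⁻¹ * ∑ l, ∑ m, K l m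

theorem doubleCenter_const_mul (c : ℝ) (K : ι → ι → ℝ) (i j : ι) :
    doubleCenter (fun a b => c * K a b) i j = c * doubleCenter K i j := by
  simp only [doubleCenter, ← mul_sum]
  ring

theorem doubleCenter_row_add_col_add [Nonempty ι] (f g : ι → ℝ) (K : ι → ι → ℝ) (i j : ι) :
    doubleCenter (fun a b => f a + g b + K a b) i j = doubleCenter K i j := by
  have hcard : (Fintype.card ι : ℝ) ≠ 0 := Nat.cast_ne_zero.mpr Fintype.card_ne_zero
  simp only [doubleCenter, sum_add_distrib, sum_const, card_univ, nsmul_eq_mul, ← mul_sum]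
  field_simp
  ring

theorem doubleCenter_const [Nonempty ι] (c : ℝ) (i j : ι) :
    doubleCenter (fun _ _ => c) i j = 0 := by
  simpa [doubleCenter] using doubleCenter_row_add_col_add (fun _ => c) 0 0 i j

section InnerProduct

variable {E : Type*} [NormedAddCommGroup E] [InnerProductSpace ℝ E]

theorem doubleCenter_inner_of_sum_eq_zero {x : ι → E} (hx : ∑ l, x l = 0) (i j : ι) :
    doubleCenter (fun a b => inner ℝ (x a) (x b)) i j = inner ℝ (x i) (x j) := by
  simp only [doubleCenter, ← inner_sum, ← sum_inner, hx, inner_zero_left, inner_zero_right,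
    sum_const_zero, mul_zero, sub_zero, add_zero]

theorem doubleCenter_norm_sub_sq [Nonempty ι] (x : ι → E) (i j : ι) :
    doubleCenter (fun a b => ‖x a - x b‖ ^ 2) i j
      = -2 * doubleCenter (fun a b => inner ℝ (x a) (x b)) i j := by
  have hexpand : (fun a b => ‖x a - x b‖ ^ 2)
      = fun a b => ‖x a‖ ^ 2 + ‖x b‖ ^ 2 + -2 * inner ℝ (x a) (x b) := by
    ext a b
    rw [norm_sub_sq_real]
    ring
  rw [hexpand, doubleCenter_row_add_col_add, doubleCenter_const_mul]

theorem doubleCenter_neg_norm_sub_sq_of_sum_eq_zero {x : ι → E} (hx : ∑ l, x l = 0) (i j : ι) :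
    doubleCenter (fun a b => -‖x a - x b‖ ^ 2) i j = 2 * inner ℝ (x i) (x j) := by
  have : Nonempty ι := ⟨i⟩
  calc doubleCenter (fun a b => -‖x a - x b‖ ^ 2) i j
      = -1 * doubleCenter (fun a b => ‖x a - x b‖ ^ 2) i j := by
        simpa using doubleCenter_const_mul (-1) (fun a b => ‖x a - x b‖ ^ 2) i j
    _ = 2 * inner ℝ (x i) (x j) := by
        rw [doubleCenter_norm_sub_sq, doubleCenter_inner_of_sum_eq_zero hx]
        ring

end InnerProduct

theorem hasDerivAt_doubleCenter {K : ℝ → ι → ι → ℝ} {K' : ι → ι → ℝ} {t : ℝ}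
    (hK : ∀ a b, HasDerivAt (fun γ => K γ a b) (K' a b) t) (i j : ι) :
    HasDerivAt (fun γ => doubleCenter (K γ) i j) (doubleCenter K' i j) t :=
  (((hK i j).sub ((HasDerivAt.fun_sum fun l _ => hK i l).const_mul _)).sub
    ((HasDerivAt.fun_sum fun l _ => hK l j).const_mul _)).add
    ((HasDerivAt.fun_sum fun l _ => HasDerivAt.fun_sum fun m _ => hK l m).const_mul _)

end DoubleCenter

theorem hasDerivAt_exp_neg_mul_zero (d : ℝ) :
    HasDerivAt (fun γ => Real.exp (-γ * d)) (-d) 0 := by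
  simpa using ((hasDerivAt_neg 0).mul_const d).exp

theorem tendsto_inv_two_mul_mul_of_hasDerivAt {f : ℝ → ℝ} {f' : ℝ} (hf0 : f 0 = 0)
    (hf : HasDerivAt f f' 0) :
    Tendsto (fun γ => (2 * γ)⁻¹ * f γ) (𝓝[>] 0) (𝓝 (f' / 2)) := by
  have hslope := hf.tendsto_slope_zero_right.const_mul 2⁻¹
  simp only [zero_add, hf0, sub_zero, smul_eq_mul] at hslope
  convert hslope using 2 with γ
  · rw [mul_inv]
    ring
  · ring

end

/-- For centered data, the centered RBF kernel, rescaled by `(2γ)⁻¹`, converges to the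
linear kernel `X_i'X_j` as `γ → 0⁺`. -/
theorem rbf_kernel_limit (T N : ℕ) (X : Fin T → EuclideanSpace ℝ (Fin N))
    (hcenter : ∑ l, X l = 0) (i j : Fin T) :
    let ktil : ℝ → Fin T → Fin T → ℝ := fun γ a b => Real.exp (-γ * ‖X a - X b‖ ^ 2)
    let kc : ℝ → ℝ := fun γ =>
      ktil γ i j - (T : ℝ)⁻¹ * ∑ l, ktil γ i l - (T : ℝ)⁻¹ * ∑ l, ktil γ l j
        + ((T : ℝ) ^ 2)⁻¹ * ∑ l, ∑ m, ktil γ l m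
    Tendsto (fun γ => (2 * γ)⁻¹ * kc γ) (nhdsWithin 0 (Set.Ioi 0))
      (nhds (inner ℝ (X i) (X j) : ℝ)) := by
  intro ktil kc
  have : Nonempty (Fin T) := ⟨i⟩
  have hkc : kc = fun γ => doubleCenter (ktil γ) i j := by
    simp only [kc, doubleCenter, Fintype.card_fin]
  have hkc0 : kc 0 = 0 := by
    simpa [hkc, ktil] using doubleCenter_const (ι := Fin T) 1 i j
  have hderiv : HasDerivAt kc (2 * inner ℝ (X i) (X j)) 0 := by
    rw [hkc, ← doubleCenter_neg_norm_sub_sq_of_sum_eq_zero hcenter]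
    exact hasDerivAt_doubleCenter (fun a b => hasDerivAt_exp_neg_mul_zero (‖X a - X b‖ ^ 2)) i j
  simpa using tendsto_inv_two_mul_mul_of_hasDerivAt hkc0 hderiv
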